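/- Let R be a commutative ring and a ⊆ R an ideal. Then a is weakly large quasifair (i.e., Ass^f_R(Γ̄_a(M)) = Ass^f_R(M) ∩ var(a) for every R-module M) if and only if for every R-module M, Γ̄_a(M) = 0 is equivalent to Ass^f_R(M) ∩ var(a) = ∅. -/

import Mathlib

/-!
Since `Ass^f(N) = ∅` exactly when `N = 0`, weak large quasifairness gives the criterion at once.
Conversely, `Ass^f(M) ⊆ Ass^f(N) ∪ Ass^f(M/N)` for every submodule `N`, and `Γ̄_a(M/Γ̄_a(M)) = 0`,
so the criterion applied to `M/Γ̄_a(M)` shows that every weakly associated prime of `M` containing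
`a` is weakly associated to `Γ̄_a(M)`; the reverse inclusion holds for any `a`.
-/

open Submodule

universe u v

variable {R : Type u} [CommRing R]

/-- The small `a`-torsion submodule `Γ_a(M) = {x | ∃ n, a^n • x = 0}`. -/
def smallTorsion (a : Ideal R) (M : Type v) [AddCommGroup M] [Module R M] :
    Submodule R M where
  carrier := {x | ∃ n : ℕ, ∀ r ∈ a ^ n, r • x = 0}
  zero_mem' := ⟨0, fun r _ => smul_zero r⟩
  add_mem' := by
    rintro x y ⟨n, hn⟩ ⟨m, hm⟩
    refine ⟨n + m, fun r hr => ?_⟩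
    have h1 : r ∈ a ^ n := Ideal.pow_le_pow_right (Nat.le_add_right n m) hr
    have h2 : r ∈ a ^ m := Ideal.pow_le_pow_right (Nat.le_add_left m n) hr
    rw [smul_add, hn r h1, hm r h2, add_zero]
  smul_mem' := by
    rintro c x ⟨n, hn⟩
    exact ⟨n, fun r hr => by rw [smul_comm, hn r hr, smul_zero]⟩

/-- The large `a`-torsion submodule `Γ̄_a(M) = {x | a ⊆ √(0 : x)}`. -/
def largeTorsion (a : Ideal R) (M : Type v) [AddCommGroup M] [Module R M] :
    Submodule R M where
  carrier := {x | ∀ r ∈ a, ∃ n : ℕ, r ^ n • x = 0}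
  zero_mem' := fun r _ => ⟨0, smul_zero _⟩
  add_mem' := by
    rintro x y hx hy r hr
    obtain ⟨n, hn⟩ := hx r hr
    obtain ⟨m, hm⟩ := hy r hr
    refine ⟨n + m, ?_⟩
    have hx' : r ^ (n + m) • x = 0 := by
      rw [pow_add, mul_comm, mul_smul, hn, smul_zero]
    have hy' : r ^ (n + m) • y = 0 := by
      rw [pow_add, mul_smul, hm, smul_zero]
    rw [smul_add, hx', hy', add_zero]
  smul_mem' := by
    rintro c x hx r hr
    obtain ⟨n, hn⟩ := hx r hr
    exact ⟨n, by rw [smul_comm, hn, smul_zero]⟩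

/-- The set of weakly associated primes of `M`: primes minimal over the
annihilator `(0 :_R x)` of some `x ∈ M`. -/
def weakAssPrimes (R : Type u) [CommRing R] (M : Type v) [AddCommGroup M]
    [Module R M] : Set (Ideal R) :=
  {p | ∃ x : M, p ∈ Ideal.minimalPrimes (LinearMap.ker (LinearMap.toSpanSingleton R M x))}

/-- The variety of an ideal: the set of primes containing it. -/
def varI (a : Ideal R) : Set (Ideal R) := {p | p.IsPrime ∧ a ≤ p}

open LinearMap

theorem Ideal.mem_minimalPrimes_of_le_of_le {I J p : Ideal R} (hp : p ∈ I.minimalPrimes)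
    (hIJ : I ≤ J) (hJp : J ≤ p) : p ∈ J.minimalPrimes :=
  ⟨⟨hp.1.1, hJp⟩, fun _ hq hqp => hp.2 ⟨hq.1, hIJ.trans hq.2⟩ hqp⟩

section

variable {M M' : Type*} [AddCommGroup M] [Module R M] [AddCommGroup M'] [Module R M']

theorem mem_ker_toSpanSingleton_iff {x : M} {r : R} :
    r ∈ ker (toSpanSingleton R M x) ↔ r • x = 0 := by
  rw [mem_ker, toSpanSingleton_apply]

theorem ker_toSpanSingleton_le_ker_toSpanSingleton_map (f : M →ₗ[R] M') (x : M) :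
    ker (toSpanSingleton R M x) ≤ ker (toSpanSingleton R M' (f x)) := by
  rw [← comp_toSpanSingleton]
  exact ker_le_ker_comp _ _

theorem ker_toSpanSingleton_map_of_injective {f : M →ₗ[R] M'} (hf : Function.Injective f)
    (x : M) : ker (toSpanSingleton R M' (f x)) = ker (toSpanSingleton R M x) := by
  rw [← comp_toSpanSingleton, ker_comp_of_ker_eq_bot _ (ker_eq_bot.mpr hf)]

theorem weakAssPrimes_eq_iUnion :
    weakAssPrimes R M = ⋃ x : M, Ideal.minimalPrimes (ker (toSpanSingleton R M x)) := by
  ext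
  simp [weakAssPrimes]

theorem weakAssPrimes_eq_empty_iff : weakAssPrimes R M = ∅ ↔ Subsingleton M := by
  simp only [weakAssPrimes_eq_iUnion, Set.iUnion_eq_empty, Ideal.minimalPrimes_eq_empty_iff,
    ker_eq_top, toSpanSingleton_eq_zero_iff]
  exact (subsingleton_iff_forall_eq 0).symm

theorem weakAssPrimes_subset_of_injective {f : M →ₗ[R] M'} (hf : Function.Injective f) :
    weakAssPrimes R M ⊆ weakAssPrimes R M' := by
  rintro p ⟨x, hp⟩
  exact ⟨f x, by rwa [ker_toSpanSingleton_map_of_injective hf]⟩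

theorem weakAssPrimes_subset_union (N : Submodule R M) :
    weakAssPrimes R M ⊆ weakAssPrimes R N ∪ weakAssPrimes R (M ⧸ N) := by
  rintro p ⟨x, hp⟩
  by_cases hle : ker (toSpanSingleton R (M ⧸ N) (N.mkQ x)) ≤ p
  · exact .inr ⟨N.mkQ x, Ideal.mem_minimalPrimes_of_le_of_le hp
      (ker_toSpanSingleton_le_ker_toSpanSingleton_map N.mkQ x) hle⟩
  obtain ⟨s, hs, hsp⟩ := SetLike.not_le_iff_exists.mp hle
  have hsx : s • x ∈ N := by
    rwa [mem_ker_toSpanSingleton_iff, ← map_smul, mkQ_apply, Submodule.Quotient.mk_eq_zero] at hs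
  have hann_le : ker (toSpanSingleton R M x) ≤ ker (toSpanSingleton R M (s • x)) := fun t ht => by
    rw [mem_ker_toSpanSingleton_iff] at ht ⊢
    rw [smul_comm, ht, smul_zero]
  -- `t • s • x = 0` puts `t * s` in `p`, and `s ∉ p`
  have hle_p : ker (toSpanSingleton R M (s • x)) ≤ p := fun t ht =>
    (hp.1.1.mem_or_mem (hp.1.2 (mem_ker_toSpanSingleton_iff.mpr
      (by rw [mul_smul]; exact mem_ker_toSpanSingleton_iff.mp ht)))).resolve_right hsp
  refine .inl ⟨⟨s • x, hsx⟩, ?_⟩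
  rw [← ker_toSpanSingleton_map_of_injective N.injective_subtype]
  exact Ideal.mem_minimalPrimes_of_le_of_le hp hann_le hle_p

end

section

variable (a : Ideal R) (M : Type v) [AddCommGroup M] [Module R M]

theorem weakAssPrimes_largeTorsion_subset_varI : weakAssPrimes R (largeTorsion a M) ⊆ varI a := by
  rintro p ⟨x, hp⟩
  rw [← ker_toSpanSingleton_map_of_injective (largeTorsion a M).injective_subtype] at hp
  refine ⟨hp.1.1, fun r hr => ?_⟩
  obtain ⟨n, hn⟩ := x.2 r hr
  exact hp.1.1.mem_of_pow_mem n (hp.1.2 (mem_ker_toSpanSingleton_iff.mpr hn))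

theorem weakAssPrimes_largeTorsion_subset :
    weakAssPrimes R (largeTorsion a M) ⊆ weakAssPrimes R M ∩ varI a :=
  Set.subset_inter (weakAssPrimes_subset_of_injective (largeTorsion a M).injective_subtype)
    (weakAssPrimes_largeTorsion_subset_varI a M)

theorem largeTorsion_quotient_largeTorsion_eq_bot :
    largeTorsion a (M ⧸ largeTorsion a M) = ⊥ := by
  refine eq_bot_iff.mpr fun y hy => ?_
  obtain ⟨x, rfl⟩ := Submodule.Quotient.mk_surjective _ y
  rw [mem_bot, Submodule.Quotient.mk_eq_zero]
  intro r hr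
  obtain ⟨n, hn⟩ := hy r hr
  rw [← Submodule.Quotient.mk_smul, Submodule.Quotient.mk_eq_zero] at hn
  obtain ⟨m, hm⟩ := hn r hr
  exact ⟨m + n, by rw [pow_add, mul_smul, hm]⟩

end

/-- `a` is weakly large quasifair iff for every module `M`,
`Γ̄_a(M) = 0 ↔ Ass^f(M) ∩ var(a) = ∅`. -/
theorem stmt7 (a : Ideal R) :
    (∀ (M : Type v) [AddCommGroup M] [Module R M],
        weakAssPrimes R (largeTorsion a M) = weakAssPrimes R M ∩ varI a) ↔
    (∀ (M : Type v) [AddCommGroup M] [Module R M],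
        (largeTorsion a M = ⊥ ↔ weakAssPrimes R M ∩ varI a = ∅)) := by
  constructor
  · intro H M _ _
    rw [← H M, weakAssPrimes_eq_empty_iff, subsingleton_iff_eq_bot]
  · intro H M _ _
    refine (weakAssPrimes_largeTorsion_subset a M).antisymm ?_
    rintro p ⟨hpM, hpa⟩
    have hquot : weakAssPrimes R (M ⧸ largeTorsion a M) ∩ varI a = ∅ :=
      (H _).mp (largeTorsion_quotient_largeTorsion_eq_bot a M)
    exact (weakAssPrimes_subset_union _ hpM).resolve_right fun hpQ => hquot.subset ⟨hpQ, hpa⟩
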